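/- For every integer δ ≥ 2, the graph G(δ) on n = δ + 3 vertices, obtained from K_n by deleting the edges of a Hamiltonian cycle, is δ-regular and satisfies rad_p(G(δ)) = 2 = n - δ - 1. -/

import Mathlib

open scoped Classical

/-- The closed neighbourhood `N[S]` of a finset of vertices. -/
noncomputable def closedNbhd {V : Type*} [Fintype V] (G : SimpleGraph V) (S : Finset V) :
    Finset V :=
  S ∪ S.biUnion fun v => G.neighborFinset v

/-- One propagation step of power domination. -/
noncomputable def pdStep {V : Type*} [Fintype V] (G : SimpleGraph V) (A : Finset V) : Finset V :=
  A ∪ closedNbhd G (A.filter fun v => (G.neighborFinset v \ A).card ≤ 1)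

/-- The monitored sets `P^i(S)`, with `P^0(S) = ∅` and `P^1(S) = N[S]`. -/
noncomputable def pdSeq {V : Type*} [Fintype V] (G : SimpleGraph V) (S : Finset V) : ℕ → Finset V
  | 0 => ∅
  | 1 => closedNbhd G S
  | (i + 2) => pdStep G (pdSeq G S (i + 1))

/-- `S` is a power dominating set of `G`. -/
def IsPDS {V : Type*} [Fintype V] (G : SimpleGraph V) (S : Finset V) : Prop :=
  ∃ i, pdSeq G S i = Finset.univ

/-- The power domination number `γ_p(G)`. -/
noncomputable def pdNum {V : Type*} [Fintype V] (G : SimpleGraph V) : ℕ :=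
  sInf {k | ∃ S : Finset V, IsPDS G S ∧ S.card = k}

/-- The propagation radius `rad_p(G, S)` of a PDS `S`. -/
noncomputable def pdRadS {V : Type*} [Fintype V] (G : SimpleGraph V) (S : Finset V) : ℕ :=
  sInf {i | pdSeq G S i = Finset.univ}

/-- The propagation radius `rad_p(G)`. -/
noncomputable def pdRad {V : Type*} [Fintype V] (G : SimpleGraph V) : ℕ :=
  sInf {r | ∃ S : Finset V, IsPDS G S ∧ S.card = pdNum G ∧ pdRadS G S = r}

/-- The complement of the cycle `C_n` on `ZMod n`: the complete graph minus a
Hamiltonian cycle. -/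
def cocycle (n : ℕ) : SimpleGraph (ZMod n) where
  Adj a b := a ≠ b ∧ a - b ≠ 1 ∧ b - a ≠ 1
  symm := by
    constructor
    rintro a b ⟨h1, h2, h3⟩
    exact ⟨h1.symm, h3, h2⟩
  loopless := by
    constructor
    rintro a ⟨h, -, -⟩
    exact h rfl


/-! In the complement of `C_n` no closed neighbourhood `N[v]` contains `v + 1`, so no vertex
dominates and every power dominating singleton needs at least two rounds. On the other hand
`N[0] = V \ {±1}`, and for `n ≥ 5` the vertex `2` sees `-1` but not `1`, so it forces `-1`;
symmetrically `-2` forces `1`. Hence `γ_p = 1` and `rad_p = 2`. -/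

open Finset

lemma ZMod.natCast_ne_zero_of_pos_of_lt {n k : ℕ} (hk : 0 < k) (hkn : k < n) :
    (k : ZMod n) ≠ 0 := by
  rw [Ne, ZMod.natCast_eq_zero_iff]
  exact fun h => (Nat.le_of_dvd hk h).not_gt hkn

lemma ZMod.one_ne_zero_of_two_le {n : ℕ} (hn : 2 ≤ n) : (1 : ZMod n) ≠ 0 := by
  exact_mod_cast ZMod.natCast_ne_zero_of_pos_of_lt (k := 1) one_pos hn

section PowerDomination

variable {V : Type*} [Fintype V] (G : SimpleGraph V)

lemma mem_closedNbhd {S : Finset V} {w : V} :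
    w ∈ closedNbhd G S ↔ w ∈ S ∨ ∃ v ∈ S, G.Adj v w := by
  simp [closedNbhd]

lemma pdSeq_two (S : Finset V) : pdSeq G S 2 = pdStep G (closedNbhd G S) := rfl

lemma subset_pdStep (A : Finset V) : A ⊆ pdStep G A := subset_union_left

lemma mem_pdStep_of_adj {A : Finset V} {v w : V} (hv : v ∈ A)
    (hforce : (G.neighborFinset v \ A).card ≤ 1) (hvw : G.Adj v w) : w ∈ pdStep G A := by
  simp only [pdStep, mem_union, mem_closedNbhd, mem_filter]
  exact Or.inr (Or.inr ⟨v, ⟨hv, hforce⟩, hvw⟩)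

lemma mem_pdStep_univ_sdiff_pair [DecidableEq V] {a b v : V} (hva : G.Adj v a) (hvb : ¬G.Adj v b)
    (hv : v ≠ b) : a ∈ pdStep G (univ \ {a, b}) := by
  refine mem_pdStep_of_adj G (by simp [hva.ne, hv]) ?_ hva
  refine (card_le_card fun x hx => ?_).trans (card_singleton a).le
  simp only [mem_sdiff, SimpleGraph.mem_neighborFinset, mem_univ, true_and, mem_insert,
    mem_singleton, not_not] at hx
  obtain ⟨hvx, rfl | rfl⟩ := hx
  · exact mem_singleton_self x
  · exact absurd hvx hvb

lemma pdSeq_empty : ∀ i, pdSeq G ∅ i = ∅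
  | 0 => rfl
  | 1 => by simp [pdSeq, closedNbhd]
  | i + 2 => by
    rw [pdSeq, pdSeq_empty (i + 1)]
    simp [pdStep, closedNbhd]

variable [Nonempty V]

lemma pdNum_eq_one {v : V} (hv : IsPDS G {v}) : pdNum G = 1 := by
  have hone : 1 ∈ {k | ∃ S : Finset V, IsPDS G S ∧ S.card = k} := ⟨{v}, hv, card_singleton v⟩
  refine (Nat.sInf_le hone).antisymm (Nat.one_le_iff_ne_zero.2 fun h0 => ?_)
  obtain ⟨S, ⟨i, hi⟩, hS⟩ : pdNum G ∈ {k | ∃ S : Finset V, IsPDS G S ∧ S.card = k} :=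
    Nat.sInf_mem ⟨1, hone⟩
  rw [show pdNum G = 0 from h0, card_eq_zero] at hS
  subst hS
  exact univ_nonempty.ne_empty (hi.symm.trans (pdSeq_empty G i))

lemma two_le_pdRadS {S : Finset V} (hS : IsPDS G S) (hdom : closedNbhd G S ≠ univ) :
    2 ≤ pdRadS G S := by
  have hmem : pdSeq G S (pdRadS G S) = univ := Nat.sInf_mem hS
  by_contra! hlt
  interval_cases h : pdRadS G S
  · exact univ_nonempty.ne_empty hmem.symm
  · exact hdom hmem

lemma pdRad_eq_two {v : V} (hv : pdSeq G {v} 2 = univ)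
    (hdom : ∀ u : V, closedNbhd G {u} ≠ univ) : pdRad G = 2 := by
  have hnum := pdNum_eq_one G ⟨2, hv⟩
  refine IsLeast.csInf_eq ⟨⟨{v}, ⟨2, hv⟩, by rw [hnum, card_singleton], ?_⟩, ?_⟩
  · exact (Nat.sInf_le hv).antisymm (two_le_pdRadS G ⟨2, hv⟩ (hdom v))
  · rintro r ⟨S, hS, hcard, rfl⟩
    obtain ⟨u, rfl⟩ := card_eq_one.1 (hcard.trans hnum)
    exact two_le_pdRadS G hS (hdom u)

end PowerDomination

namespace cocycle

variable {n : ℕ}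

lemma adj_iff {a b : ZMod n} : (cocycle n).Adj a b ↔ a ≠ b ∧ a - b ≠ 1 ∧ b - a ≠ 1 := Iff.rfl

lemma adj_neg_iff {a b : ZMod n} : (cocycle n).Adj (-a) (-b) ↔ (cocycle n).Adj a b := by
  simp only [adj_iff, ne_eq, neg_inj, neg_sub_neg]
  tauto

lemma not_adj_of_sub_eq_one {a b : ZMod n} (h : a - b = 1) : ¬(cocycle n).Adj a b :=
  fun hab => hab.2.1 h

lemma adj_two_neg_one (hn : 5 ≤ n) : (cocycle n).Adj 2 (-1) := by
  have h2 : (2 : ZMod n) ≠ 0 := by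
    exact_mod_cast ZMod.natCast_ne_zero_of_pos_of_lt (k := 2) two_pos (by omega)
  have h3 : (3 : ZMod n) ≠ 0 := by
    exact_mod_cast ZMod.natCast_ne_zero_of_pos_of_lt (k := 3) (by norm_num) (by omega)
  have h4 : (4 : ZMod n) ≠ 0 := by
    exact_mod_cast ZMod.natCast_ne_zero_of_pos_of_lt (k := 4) (by norm_num) (by omega)
  refine adj_iff.2 ⟨fun h => h3 ?_, fun h => h2 ?_, fun h => h4 ?_⟩
  · linear_combination h
  · linear_combination h
  · linear_combination -h

variable [NeZero n]

lemma neighborFinset_eq (v : ZMod n) :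
    (cocycle n).neighborFinset v = univ \ {v - 1, v, v + 1} := by
  ext w
  simp only [SimpleGraph.mem_neighborFinset, adj_iff, mem_sdiff, mem_univ, true_and,
    mem_insert, mem_singleton, not_or]
  refine ⟨fun ⟨h1, h2, h3⟩ => ⟨fun h => h2 (by rw [h]; ring), Ne.symm h1,
    fun h => h3 (by rw [h]; ring)⟩, fun ⟨h1, h2, h3⟩ => ⟨Ne.symm h2,
    fun h => h1 (by linear_combination -h), fun h => h3 (by linear_combination h)⟩⟩

lemma degree_eq (hn : 3 ≤ n) (v : ZMod n) : (cocycle n).degree v = n - 3 := by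
  have h1 := ZMod.one_ne_zero_of_two_le (by omega : 2 ≤ n)
  have h2 : (2 : ZMod n) ≠ 0 := by
    exact_mod_cast ZMod.natCast_ne_zero_of_pos_of_lt (k := 2) two_pos (by omega)
  have hcard : ({v - 1, v, v + 1} : Finset (ZMod n)).card = 3 := by
    rw [card_insert_of_notMem, card_pair]
    · exact fun h => h1 (by linear_combination -h)
    · simp only [mem_insert, mem_singleton, not_or]
      exact ⟨fun h => h1 (by linear_combination -h), fun h => h2 (by linear_combination -h)⟩
  rw [← SimpleGraph.card_neighborFinset_eq_degree, neighborFinset_eq, card_univ_sdiff, hcard,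
    ZMod.card]

lemma closedNbhd_singleton_ne_univ (hn : 2 ≤ n) (v : ZMod n) :
    closedNbhd (cocycle n) {v} ≠ univ := by
  have h1 := ZMod.one_ne_zero_of_two_le hn
  intro h
  have hmem : v + 1 ∈ closedNbhd (cocycle n) {v} := h ▸ mem_univ _
  rcases (mem_closedNbhd _).1 hmem with hv | ⟨u, hu, hadj⟩
  · exact h1 (by linear_combination mem_singleton.1 hv)
  · rw [mem_singleton.1 hu] at hadj
    exact not_adj_of_sub_eq_one (by ring) hadj.symm

lemma closedNbhd_zero (hn : 2 ≤ n) :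
    closedNbhd (cocycle n) {0} = univ \ {-1, 1} := by
  have h1 := ZMod.one_ne_zero_of_two_le hn
  ext w
  simp only [mem_closedNbhd, mem_singleton, exists_eq_left, adj_iff, mem_sdiff, mem_univ,
    true_and, mem_insert, not_or, zero_sub, sub_zero]
  constructor
  · rintro (rfl | ⟨-, hw, hw'⟩)
    · exact ⟨fun h => h1 (by linear_combination h), Ne.symm h1⟩
    · exact ⟨fun h => hw (by rw [h]; ring), hw'⟩
  · rintro ⟨hw, hw'⟩
    by_cases h0 : w = 0
    · exact Or.inl h0
    · exact Or.inr ⟨Ne.symm h0, fun h => hw (by linear_combination -h), hw'⟩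

lemma pdSeq_zero_two (hn : 5 ≤ n) : pdSeq (cocycle n) {0} 2 = univ := by
  have h1 := ZMod.one_ne_zero_of_two_le (by omega : 2 ≤ n)
  have hadj := adj_two_neg_one hn
  have hnot_adj : ¬(cocycle n).Adj 2 1 := not_adj_of_sub_eq_one (by ring)
  have hne : (2 : ZMod n) ≠ 1 := fun h => h1 (by linear_combination h)
  have hforce_neg_one : (-1 : ZMod n) ∈ pdStep (cocycle n) (univ \ {-1, 1}) :=
    mem_pdStep_univ_sdiff_pair _ hadj hnot_adj hne
  have hforce_one : (1 : ZMod n) ∈ pdStep (cocycle n) (univ \ {-1, 1}) := by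
    rw [pair_comm]
    refine mem_pdStep_univ_sdiff_pair _ (v := -2) ?_ ?_ (neg_injective.ne hne)
    · simpa using adj_neg_iff.2 hadj
    · simpa using (adj_neg_iff (a := 2) (b := 1)).not.2 hnot_adj
  rw [pdSeq_two, closedNbhd_zero (by omega)]
  refine eq_univ_of_forall fun w => ?_
  by_cases hw : w = -1 ∨ w = 1
  · rcases hw with rfl | rfl
    · exact hforce_neg_one
    · exact hforce_one
  · exact subset_pdStep _ _ (by simpa using hw)

end cocycle

theorem stmt_8 (δ : ℕ) (hδ : 2 ≤ δ) :
    (∀ v : ZMod (δ + 3), (cocycle (δ + 3)).degree v = δ) ∧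
      pdRad (cocycle (δ + 3)) = 2 ∧ 2 = (δ + 3) - δ - 1 :=
  ⟨fun v => cocycle.degree_eq (by omega) v,
    pdRad_eq_two _ (cocycle.pdSeq_zero_two (by omega))
      (cocycle.closedNbhd_singleton_ne_univ (by omega)),
    by omega⟩
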